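/- arXiv:2507.18835 — 3 statements merged into one kernel-verified Lean document; each statement's English description precedes it below -/
import Mathlib

section
/- Let Z be a RF on a complete non-atomic probability space satisfying (★), and suppose the class C[Z] is nonempty. Then C[Z] contains an L^α-continuous element, i.e., there exists a RF Z* belonging to C[Z] such that for every t ∈ T, E[‖Z*(s) − Z*(t)‖^α] → 0 as s → t. -/
open MeasureTheory ProbabilityTheory Filter
open scoped ENNReal Topology

noncomputable section

abbrev Tsp (l : ℕ) : Type := EuclideanSpace ℝ (Fin l)
abbrev Vsp (d : ℕ) : Type := EuclideanSpace ℝ (Fin d)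
abbrev RPath (l d : ℕ) : Type := Tsp l → Vsp d

/-- The shift `B^h f = f(· − h)`. -/
def shift {l d : ℕ} (h : Tsp l) (f : RPath l d) : RPath l d := fun t => f (t - h)

/-- Joint measurability of a random field. -/
def JointlyMeasurable {Ω : Type*} [MeasurableSpace Ω] {l d : ℕ} (Z : Ω → RPath l d) : Prop :=
  Measurable fun p : Ω × Tsp l => Z p.1 p.2

/-- `F ∈ H_β`: product-measurable and `β`-homogeneous maps on path space. -/
def Hom (l d : ℕ) (β : ℝ) (F : RPath l d → ℝ≥0∞) : Prop :=
  Measurable F ∧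
  ∀ c : ℝ, 0 < c → ∀ f : RPath l d,
    F (fun t => c • f t) = ENNReal.ofReal (c ^ β) * F f

/-- Condition (★). -/
def StarC {Ω : Type*} [MeasurableSpace Ω] (P : Measure Ω) {l d : ℕ} (α : ℝ)
    (Z : Ω → RPath l d) : Prop :=
  JointlyMeasurable Z ∧
  (∫⁻ ω, ENNReal.ofReal (‖Z ω 0‖ ^ α) ∂P) = 1 ∧
  ∃ T₀ : Set (Tsp l), T₀.Countable ∧ P {ω | ∃ t ∈ T₀, 0 < ‖Z ω t‖} = 1

/-- `Z̃ ∈ C[Z]`. -/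
def MemC {Ω Ω' : Type*} [MeasurableSpace Ω] [MeasurableSpace Ω']
    (P : Measure Ω) (P' : Measure Ω') {l d : ℕ} (α : ℝ)
    (Z : Ω → RPath l d) (ZT : Ω' → RPath l d) : Prop :=
  StarC P' α ZT ∧
  ∀ F : RPath l d → ℝ≥0∞, Hom l d α F → ∀ h : Tsp l,
    (∫⁻ ω, F (Z ω) ∂P) = ∫⁻ ω', F (shift h (ZT ω')) ∂P'

/-- `S_γ(f) = ∫ ‖f(t)‖^α γ(t) dt`. -/
def Sgam {l d : ℕ} (α : ℝ) (γ : Tsp l → ℝ) (f : RPath l d) : ℝ≥0∞ :=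
  ∫⁻ t, ENNReal.ofReal (‖f t‖ ^ α * γ t)

/-- `S(f) = ∫ ‖f(t)‖^α dt`. -/
def Sfun {l d : ℕ} (α : ℝ) (f : RPath l d) : ℝ≥0∞ :=
  ∫⁻ t, ENNReal.ofReal (‖f t‖ ^ α)

/-- The local random field `Z̃/‖Z̃(0)‖` (set to `0` where `‖Z̃(0)‖ = 0`). -/
def localRF {Ω : Type*} {l d : ℕ} (ZT : Ω → RPath l d) (ω : Ω) : RPath l d :=
  fun t => if ‖ZT ω 0‖ = 0 then 0 else ‖ZT ω 0‖⁻¹ • ZT ω t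

/-- The tilted measure `P̂`. -/
def tilted {Ω : Type*} [MeasurableSpace Ω] (P : Measure Ω) {l d : ℕ} (α : ℝ)
    (ZT : Ω → RPath l d) : Measure Ω :=
  P.withDensity fun ω => ENNReal.ofReal (‖ZT ω 0‖ ^ α)

/-!
An element `Z̃` of `C[Z]` is itself `L^α`-continuous. Feeding the `α`-homogeneous functionals
`f ↦ ‖f s - f t‖^α` and `f ↦ ‖f t‖^α` into the defining identity of `C[Z]` shows that
`E‖Z̃(s) - Z̃(t)‖^α` is invariant under joint shifts of `s, t` and that `E‖Z̃(t)‖^α = 1`.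
Cut off outside a ball, almost every path of `Z̃` lies in `L^α(λ)`, where translation is
continuous for every `α > 0` (for `α < 1`, `‖·‖^α` only gives a quasi-norm, which suffices).
Dominated convergence over `ω` then gives `∫_B E‖Z̃(t + u) - Z̃(t)‖^α dt → 0` as `u → 0`, and by
stationarity of the increments the integrand does not depend on `t`.
-/

open ENNReal
open scoped symmDiff

theorem enorm_sub_rpow_le {E : Type*} [NormedAddCommGroup E] {α : ℝ} (hα : 0 ≤ α) (a b : E) :
    ‖a - b‖ₑ ^ α ≤ 2 ^ α * (‖a‖ₑ ^ α + ‖b‖ₑ ^ α) :=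
  calc ‖a - b‖ₑ ^ α ≤ (2 * max ‖a‖ₑ ‖b‖ₑ) ^ α := by
        gcongr
        calc ‖a - b‖ₑ ≤ ‖a‖ₑ + ‖b‖ₑ := enorm_sub_le
          _ ≤ max ‖a‖ₑ ‖b‖ₑ + max ‖a‖ₑ ‖b‖ₑ := add_le_add (le_max_left _ _) (le_max_right _ _)
          _ = 2 * max ‖a‖ₑ ‖b‖ₑ := (two_mul _).symm
    _ = 2 ^ α * max (‖a‖ₑ ^ α) (‖b‖ₑ ^ α) := by
        rw [ENNReal.mul_rpow_of_nonneg _ _ hα, (ENNReal.monotone_rpow_of_nonneg hα).map_max]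
    _ ≤ 2 ^ α * (‖a‖ₑ ^ α + ‖b‖ₑ ^ α) := by
        gcongr
        exact max_le le_self_add le_add_self

section AddRightInvariant

variable {G E : Type*} [AddGroup G] [MeasurableSpace G] [MeasurableAdd G] {μ : Measure G}
  [μ.IsAddRightInvariant] [NormedAddCommGroup E]

theorem eLpNorm_comp_add_right_sub_le {p : ℝ≥0∞} {f g : G → E} (hf : AEStronglyMeasurable f μ)
    (hg : AEStronglyMeasurable g μ) (u : G) :
    eLpNorm (fun x => f (x + u) - f x) p μ ≤ LpAddConst p * (eLpNorm (f - g) p μ +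
      LpAddConst p * (eLpNorm (fun x => g (x + u) - g x) p μ + eLpNorm (f - g) p μ)) := by
  have hτ := measurePreserving_add_right μ u
  have hfg : AEStronglyMeasurable (f - g) μ := hf.sub hg
  have hgu : AEStronglyMeasurable (fun x => g (x + u) - g x) μ :=
    (hg.comp_measurePreserving hτ).sub hg
  have hsplit : (fun x => f (x + u) - f x) =
      ((f - g) ∘ (· + u)) + ((fun x => g (x + u) - g x) + (g - f)) := by
    funext x; simp only [Pi.add_apply, Pi.sub_apply, Function.comp_apply]; abel
  have hshift : eLpNorm ((f - g) ∘ (· + u)) p μ = eLpNorm (f - g) p μ :=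
    eLpNorm_comp_measurePreserving hfg hτ
  rw [hsplit]
  calc eLpNorm (((f - g) ∘ (· + u)) + ((fun x => g (x + u) - g x) + (g - f))) p μ
      ≤ LpAddConst p * (eLpNorm ((f - g) ∘ (· + u)) p μ +
          eLpNorm ((fun x => g (x + u) - g x) + (g - f)) p μ) :=
        eLpNorm_add_le' (hfg.comp_measurePreserving hτ) (hgu.add (hg.sub hf)) p
    _ ≤ LpAddConst p * (eLpNorm ((f - g) ∘ (· + u)) p μ +
          LpAddConst p * (eLpNorm (fun x => g (x + u) - g x) p μ + eLpNorm (g - f) p μ)) := by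
        gcongr
        exact eLpNorm_add_le' hgu (hg.sub hf) p
    _ = _ := by rw [hshift, eLpNorm_sub_comm g f]

theorem tendsto_eLpNorm_add_comp_add_right_sub [TopologicalSpace G] {p : ℝ≥0∞} {f g : G → E}
    (hf : AEStronglyMeasurable f μ) (hg : AEStronglyMeasurable g μ)
    (hf' : Tendsto (fun u => eLpNorm (fun x => f (x + u) - f x) p μ) (𝓝 0) (𝓝 0))
    (hg' : Tendsto (fun u => eLpNorm (fun x => g (x + u) - g x) p μ) (𝓝 0) (𝓝 0)) :
    Tendsto (fun u => eLpNorm (fun x => (f + g) (x + u) - (f + g) x) p μ) (𝓝 0) (𝓝 0) := by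
  have hbound : ∀ u, eLpNorm (fun x => (f + g) (x + u) - (f + g) x) p μ ≤
      LpAddConst p * (eLpNorm (fun x => f (x + u) - f x) p μ +
        eLpNorm (fun x => g (x + u) - g x) p μ) := by
    intro u
    have hτ := measurePreserving_add_right μ u
    have hsplit : (fun x => (f + g) (x + u) - (f + g) x) =
        (fun x => f (x + u) - f x) + (fun x => g (x + u) - g x) := by
      funext x; simp only [Pi.add_apply]; abel
    rw [hsplit]
    exact eLpNorm_add_le' ((hf.comp_measurePreserving hτ).sub hf)
      ((hg.comp_measurePreserving hτ).sub hg) p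
  have hlim := ENNReal.Tendsto.const_mul (hf'.add hg') (Or.inr (LpAddConst_lt_top p).ne)
  rw [add_zero, mul_zero] at hlim
  exact tendsto_of_tendsto_of_tendsto_of_le_of_le tendsto_const_nhds hlim (fun _ => zero_le) hbound

theorem lintegral_enorm_comp_add_right_sub_rpow_le {α : ℝ} (hα : 0 ≤ α) {f : G → E}
    (hf : AEStronglyMeasurable f μ) (u : G) :
    ∫⁻ x, ‖f (x + u) - f x‖ₑ ^ α ∂μ ≤ 2 ^ α * (2 * ∫⁻ x, ‖f x‖ₑ ^ α ∂μ) :=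
  calc ∫⁻ x, ‖f (x + u) - f x‖ₑ ^ α ∂μ
      ≤ ∫⁻ x, 2 ^ α * (‖f (x + u)‖ₑ ^ α + ‖f x‖ₑ ^ α) ∂μ :=
        lintegral_mono fun x => enorm_sub_rpow_le hα _ _
    _ = 2 ^ α * (2 * ∫⁻ x, ‖f x‖ₑ ^ α ∂μ) := by
        rw [lintegral_const_mul' _ _ (by finiteness),
          lintegral_add_right' _ (hf.enorm.pow_const α),
          lintegral_add_right_eq_self (fun x => ‖f x‖ₑ ^ α) u, two_mul]

end AddRightInvariant

section LocallyFinite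

variable {G E : Type*} [AddGroup G] [TopologicalSpace G] [IsTopologicalAddGroup G]
  [MeasurableSpace G] [BorelSpace G] {μ : Measure G} [μ.IsAddRightInvariant]
  [IsLocallyFiniteMeasure μ] [μ.InnerRegularCompactLTTop] [NormedAddCommGroup E] {α : ℝ}

theorem tendsto_measure_preimage_add_right_symmDiff {s : Set G} (hs : NullMeasurableSet s μ)
    (hμs : μ s ≠ ∞) :
    Tendsto (fun u : G => μ (((· + u) ⁻¹' s) ∆ s)) (𝓝 0) (𝓝 0) := by
  let addRight : C(G, C(G, G)) := (ContinuousMap.mk (fun p : G × G => p.2 + p.1)).curry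
  have h := tendsto_measure_symmDiff_preimage_nhds_zero
    (addRight.continuous.tendsto 0) (.of_forall fun u => measurePreserving_add_right μ u)
    (measurePreserving_add_right μ 0) hs hμs
  convert h using 4 <;> ext <;> simp [addRight]

theorem tendsto_eLpNorm_indicator_comp_add_right_sub {p : ℝ≥0∞} (hp : p ≠ 0) (hp' : p ≠ ∞)
    {s : Set G} (hs : MeasurableSet s) (hμs : μ s ≠ ∞) (c : E) :
    Tendsto (fun u : G => eLpNorm (fun x => s.indicator (fun _ => c) (x + u)
      - s.indicator (fun _ => c) x) p μ) (𝓝 0) (𝓝 0) := by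
  have hbound : ∀ u : G, eLpNorm (fun x => s.indicator (fun _ => c) (x + u)
      - s.indicator (fun _ => c) x) p μ ≤ ‖‖c‖‖ₑ * μ (((· + u) ⁻¹' s) ∆ s) ^ (1 / p.toReal) := by
    intro u
    refine (eLpNorm_mono fun x => ?_).trans (eLpNorm_indicator_const_le ‖c‖ p)
    by_cases h₁ : x + u ∈ s <;> by_cases h₂ : x ∈ s <;>
      simp [h₁, h₂, Set.mem_symmDiff]
  have hlim : Tendsto (fun u : G => ‖‖c‖‖ₑ * μ (((· + u) ⁻¹' s) ∆ s) ^ (1 / p.toReal))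
      (𝓝 0) (𝓝 0) := by
    have hpos : 0 < p.toReal⁻¹ := inv_pos.mpr (ENNReal.toReal_pos hp hp')
    have h := ENNReal.Tendsto.const_mul
      (((ENNReal.continuous_rpow_const (y := 1 / p.toReal)).tendsto 0).comp
      (tendsto_measure_preimage_add_right_symmDiff hs.nullMeasurableSet hμs))
      (a := ‖‖c‖‖ₑ) (Or.inr enorm_ne_top)
    simpa [ENNReal.zero_rpow_of_pos hpos] using h
  exact tendsto_of_tendsto_of_tendsto_of_le_of_le tendsto_const_nhds hlim (fun _ => zero_le) hbound

theorem MeasureTheory.MemLp.tendsto_eLpNorm_comp_add_right_sub {p : ℝ≥0∞} (hp : p ≠ ∞) {f : G → E}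
    (hf : MemLp f p μ) :
    Tendsto (fun u => eLpNorm (fun x => f (x + u) - f x) p μ) (𝓝 0) (𝓝 0) := by
  rcases eq_or_ne p 0 with rfl | hp0
  · simp
  set C := LpAddConst p
  have hC : C ≠ ∞ := (LpAddConst_lt_top p).ne
  rw [ENNReal.tendsto_nhds_zero]
  intro ε hε
  obtain ⟨g, hfg, hgm, hg⟩ := hf.induction_dense hp
    (fun g => AEStronglyMeasurable g μ ∧
      Tendsto (fun u => eLpNorm (fun x => g (x + u) - g x) p μ) (𝓝 0) (𝓝 0))
    (fun c s hs hμs _ _ => ⟨_, by simp, (aestronglyMeasurable_const.indicator hs),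
      tendsto_eLpNorm_indicator_comp_add_right_sub hp0 hp hs hμs.ne c⟩)
    (fun f g hf hg => ⟨hf.1.add hg.1, tendsto_eLpNorm_add_comp_add_right_sub hf.1 hg.1 hf.2 hg.2⟩)
    (fun f hf => hf.1)
    (ε := ε / 2 / (C + C * C))
    (ENNReal.div_pos (ENNReal.half_pos hε.ne').ne' (by finiteness)).ne'
  have hsmall : (C + C * C) * eLpNorm (f - g) p μ ≤ ε / 2 :=
    (mul_le_mul_right hfg _).trans ENNReal.mul_div_le
  have hgC := ENNReal.Tendsto.const_mul hg (Or.inr (mul_ne_top hC hC))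
  rw [mul_zero, ENNReal.tendsto_nhds_zero] at hgC
  filter_upwards [hgC (ε / 2) (ENNReal.half_pos hε.ne')] with u hu
  calc eLpNorm (fun x => f (x + u) - f x) p μ
      ≤ C * (eLpNorm (f - g) p μ +
          C * (eLpNorm (fun x => g (x + u) - g x) p μ + eLpNorm (f - g) p μ)) :=
        eLpNorm_comp_add_right_sub_le hf.1 hgm u
    _ = (C + C * C) * eLpNorm (f - g) p μ +
          C * C * eLpNorm (fun x => g (x + u) - g x) p μ := by ring
    _ ≤ ε / 2 + ε / 2 := add_le_add hsmall (by simpa using hu)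
    _ = ε := ENNReal.add_halves ε

theorem tendsto_lintegral_enorm_comp_add_right_sub_rpow (hα : 0 < α) {f : G → E}
    (hf : AEStronglyMeasurable f μ) (hfin : ∫⁻ x, ‖f x‖ₑ ^ α ∂μ ≠ ∞) :
    Tendsto (fun u => ∫⁻ x, ‖f (x + u) - f x‖ₑ ^ α ∂μ) (𝓝 0) (𝓝 0) := by
  set p := ENNReal.ofReal α
  have hp0 : p ≠ 0 := ENNReal.ofReal_ne_zero_iff.mpr hα
  have hpα : p.toReal = α := ENNReal.toReal_ofReal hα.le
  have hpow : ∀ g : G → E, ∫⁻ x, ‖g x‖ₑ ^ α ∂μ = eLpNorm g p μ ^ α := fun g => by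
    rw [eLpNorm_eq_eLpNorm' hp0 ofReal_ne_top, hpα, lintegral_rpow_enorm_eq_rpow_eLpNorm' hα]
  have hfp : MemLp f p μ :=
    ⟨hf, (eLpNorm_lt_top_iff_lintegral_rpow_enorm_lt_top hp0 ofReal_ne_top).mpr
      (hpα ▸ hfin.lt_top)⟩
  have h := ((ENNReal.continuous_rpow_const (y := α)).tendsto 0).comp
    (hfp.tendsto_eLpNorm_comp_add_right_sub ofReal_ne_top)
  simpa only [Function.comp_def, hpow, ENNReal.zero_rpow_of_pos hα] using h

theorem tendsto_lintegral_lintegral_enorm_comp_add_right_sub_rpow {Ω : Type*}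
    [MeasurableSpace Ω] {P : Measure Ω} [MeasurableSpace E] [BorelSpace E]
    [SecondCountableTopology E] [SFinite μ] [FirstCountableTopology G] (hα : 0 < α)
    {Y : Ω → G → E} (hY : Measurable fun q : Ω × G => Y q.1 q.2)
    (hfin : ∫⁻ ω, ∫⁻ x, ‖Y ω x‖ₑ ^ α ∂μ ∂P ≠ ∞) :
    Tendsto (fun u => ∫⁻ ω, ∫⁻ x, ‖Y ω (x + u) - Y ω x‖ₑ ^ α ∂μ ∂P) (𝓝 0) (𝓝 0) := by
  have hYω : ∀ ω, Measurable (Y ω) := fun ω => hY.comp measurable_prodMk_left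
  have hmoment : Measurable fun ω => ∫⁻ x, ‖Y ω x‖ₑ ^ α ∂μ :=
    (hY.enorm.pow_const α).lintegral_prod_right'
  have hincr : ∀ u : G, Measurable fun ω => ∫⁻ x, ‖Y ω (x + u) - Y ω x‖ₑ ^ α ∂μ := fun u =>
    (((hY.comp (measurable_fst.prodMk (measurable_snd.add_const u))).sub hY).enorm.pow_const
      α).lintegral_prod_right'
  have h := tendsto_lintegral_filter_of_dominated_convergence
    (fun ω => 2 ^ α * (2 * ∫⁻ x, ‖Y ω x‖ₑ ^ α ∂μ)) (.of_forall hincr)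
    (.of_forall fun u => .of_forall fun ω => lintegral_enorm_comp_add_right_sub_rpow_le hα.le
      (hYω ω).aestronglyMeasurable u)
    (by rw [lintegral_const_mul' _ _ (by finiteness), lintegral_const_mul' _ _ (by finiteness)]
        finiteness)
    ((ae_lt_top hmoment hfin).mono fun ω hω =>
      tendsto_lintegral_enorm_comp_add_right_sub_rpow hα (hYω ω).aestronglyMeasurable hω.ne)
  simpa using h

end LocallyFinite

theorem lintegral_lintegral_enorm_indicator_rpow_le {Ω G E : Type*} [MeasurableSpace Ω]
    {P : Measure Ω} [SFinite P] [MeasurableSpace G] {μ : Measure G} [SFinite μ]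
    [NormedAddCommGroup E] [MeasurableSpace E] [BorelSpace E] {α : ℝ} (hα : 0 < α)
    {X : Ω → G → E} (hX : Measurable fun q : Ω × G => X q.1 q.2) {M : ℝ≥0∞}
    (hbdd : ∀ t, ∫⁻ ω, ‖X ω t‖ₑ ^ α ∂P ≤ M) {S : Set G} (hS : MeasurableSet S) :
    ∫⁻ ω, ∫⁻ x, ‖S.indicator (X ω) x‖ₑ ^ α ∂μ ∂P ≤ M * μ S := by
  have hmoment : ∀ x, ∫⁻ ω, ‖S.indicator (X ω) x‖ₑ ^ α ∂P ≤ S.indicator (fun _ => M) x := by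
    intro x
    by_cases hx : x ∈ S
    · simpa [hx] using hbdd x
    · simp [hx, ENNReal.zero_rpow_of_pos hα]
  have hXS : Measurable fun q : Ω × G => ‖S.indicator (X q.1) q.2‖ₑ ^ α :=
    (hX.indicator (hS.preimage measurable_snd)).enorm.pow_const α
  rw [lintegral_lintegral_swap hXS.aemeasurable, ← lintegral_indicator_const hS]
  exact lintegral_mono hmoment

section NormedGroup

variable {Ω G E : Type*} [MeasurableSpace Ω] {P : Measure Ω} [SFinite P] [NormedAddCommGroup G]
  [MeasurableSpace G] [BorelSpace G] [NormedAddCommGroup E] [MeasurableSpace E] [BorelSpace E]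
  [SecondCountableTopology E] {α : ℝ} {X : Ω → G → E}

theorem lintegral_enorm_sub_rpow_mul_measure_ball_le {μ : Measure G} [SFinite μ]
    (hX : Measurable fun q : Ω × G => X q.1 q.2)
    (hstat : ∀ s t h, ∫⁻ ω, ‖X ω (s + h) - X ω (t + h)‖ₑ ^ α ∂P = ∫⁻ ω, ‖X ω s - X ω t‖ₑ ^ α ∂P)
    {u : G} (hu : ‖u‖ < 1) :
    (∫⁻ ω, ‖X ω u - X ω 0‖ₑ ^ α ∂P) * μ (Metric.ball 0 1) ≤
      ∫⁻ ω, ∫⁻ x, ‖(Metric.ball 0 2).indicator (X ω) (x + u)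
        - (Metric.ball 0 2).indicator (X ω) x‖ₑ ^ α ∂μ ∂P := by
  have hXu : Measurable fun q : Ω × G => ‖X q.1 (q.2 + u) - X q.1 q.2‖ₑ ^ α :=
    ((hX.comp (measurable_fst.prodMk (measurable_snd.add_const u))).sub hX).enorm.pow_const α
  have hXY : ∀ ω, ∀ x ∈ Metric.ball (0 : G) 1, ‖X ω (x + u) - X ω x‖ₑ ^ α =
      ‖(Metric.ball 0 2).indicator (X ω) (x + u) - (Metric.ball 0 2).indicator (X ω) x‖ₑ ^ α := by
    intro ω x hx
    rw [Metric.mem_ball, dist_zero_right] at hx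
    have hxu : x + u ∈ Metric.ball (0 : G) 2 := by
      rw [Metric.mem_ball, dist_zero_right]
      linarith [norm_add_le x u]
    have hx₂ : x ∈ Metric.ball (0 : G) 2 := by
      rw [Metric.mem_ball, dist_zero_right]
      linarith
    simp [hxu, hx₂]
  calc (∫⁻ ω, ‖X ω u - X ω 0‖ₑ ^ α ∂P) * μ (Metric.ball 0 1)
      = ∫⁻ x in Metric.ball 0 1, ∫⁻ ω, ‖X ω (x + u) - X ω x‖ₑ ^ α ∂P ∂μ := by
        rw [← setLIntegral_const]
        congr with x
        simpa [add_comm] using (hstat u 0 x).symm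
    _ = ∫⁻ ω, ∫⁻ x in Metric.ball 0 1, ‖(Metric.ball 0 2).indicator (X ω) (x + u)
          - (Metric.ball 0 2).indicator (X ω) x‖ₑ ^ α ∂μ ∂P := by
        rw [lintegral_lintegral_swap (f := fun x ω => ‖X ω (x + u) - X ω x‖ₑ ^ α)
          (hXu.comp measurable_swap).aemeasurable]
        exact lintegral_congr fun ω => setLIntegral_congr_fun measurableSet_ball (hXY ω)
    _ ≤ _ := lintegral_mono fun ω => setLIntegral_le_lintegral _ _

theorem tendsto_lintegral_enorm_sub_rpow_of_stationary_increments [ProperSpace G] (hα : 0 < α)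
    (hX : Measurable fun q : Ω × G => X q.1 q.2)
    (hstat : ∀ s t h, ∫⁻ ω, ‖X ω (s + h) - X ω (t + h)‖ₑ ^ α ∂P = ∫⁻ ω, ‖X ω s - X ω t‖ₑ ^ α ∂P)
    {M : ℝ≥0∞} (hM : M ≠ ∞) (hbdd : ∀ t, ∫⁻ ω, ‖X ω t‖ₑ ^ α ∂P ≤ M) (t : G) :
    Tendsto (fun s => ∫⁻ ω, ‖X ω s - X ω t‖ₑ ^ α ∂P) (𝓝 t) (𝓝 0) := by
  let μ : Measure G := Measure.addHaar
  have hB₁ : μ (Metric.ball 0 1) ≠ 0 := (Metric.measure_ball_pos μ 0 one_pos).ne'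
  have hY : Measurable fun q : Ω × G => (Metric.ball 0 2).indicator (X q.1) q.2 :=
    hX.indicator (measurableSet_ball.preimage measurable_snd)
  have hYfin : ∫⁻ ω, ∫⁻ x, ‖(Metric.ball 0 2).indicator (X ω) x‖ₑ ^ α ∂μ ∂P < ∞ :=
    (lintegral_lintegral_enorm_indicator_rpow_le hα hX hbdd measurableSet_ball).trans_lt
      (mul_lt_top hM.lt_top measure_ball_lt_top)
  have hJ := (ENNReal.Tendsto.div_const (tendsto_lintegral_lintegral_enorm_comp_add_right_sub_rpow
    hα hY hYfin.ne) (Or.inr hB₁))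
  rw [ENNReal.zero_div] at hJ
  have hφ : Tendsto (fun u => ∫⁻ ω, ‖X ω u - X ω 0‖ₑ ^ α ∂P) (𝓝 0) (𝓝 0) := by
    refine tendsto_of_tendsto_of_tendsto_of_le_of_le' tendsto_const_nhds hJ
      (.of_forall fun _ => zero_le) ?_
    filter_upwards [Metric.ball_mem_nhds (0 : G) one_pos] with u hu
    rw [Metric.mem_ball, dist_zero_right] at hu
    exact (ENNReal.le_div_iff_mul_le (Or.inl hB₁) (Or.inl measure_ball_lt_top.ne)).mpr
      (lintegral_enorm_sub_rpow_mul_measure_ball_le hX hstat hu)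
  have hshift : (fun s => ∫⁻ ω, ‖X ω s - X ω t‖ₑ ^ α ∂P) =
      fun s => ∫⁻ ω, ‖X ω (s - t) - X ω 0‖ₑ ^ α ∂P := by
    funext s
    simpa using hstat (s - t) 0 t
  rw [hshift]
  exact hφ.comp (by simpa using (continuous_sub_right t).tendsto t)

end NormedGroup

theorem ofReal_norm_rpow {E : Type*} [SeminormedAddGroup E] {α : ℝ} (hα : 0 ≤ α) (x : E) :
    ENNReal.ofReal (‖x‖ ^ α) = ‖x‖ₑ ^ α := by
  rw [← ENNReal.ofReal_rpow_of_nonneg (norm_nonneg x) hα, ofReal_norm]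

theorem hom_ofReal_norm_rpow {l d : ℕ} {α : ℝ} {L : RPath l d → Vsp d} (hL : Measurable L)
    (hLsmul : ∀ c : ℝ, ∀ f : RPath l d, L (fun t => c • f t) = c • L f) :
    Hom l d α fun f => ENNReal.ofReal (‖L f‖ ^ α) := by
  refine ⟨(hL.norm.pow_const α).ennreal_ofReal, fun c hc f => ?_⟩
  dsimp only
  rw [hLsmul, norm_smul, Real.norm_of_nonneg hc.le, Real.mul_rpow hc.le (norm_nonneg _),
    ENNReal.ofReal_mul (Real.rpow_nonneg hc.le _)]

theorem shift_zero {l d : ℕ} (f : RPath l d) : shift 0 f = f := by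
  funext t
  simp [shift]

theorem MemC.lintegral_shift {Ω Ω' : Type*} [MeasurableSpace Ω] [MeasurableSpace Ω']
    {P : Measure Ω} {P' : Measure Ω'} {l d : ℕ} {α : ℝ} {Z : Ω → RPath l d}
    {ZT : Ω' → RPath l d} (hZT : MemC P P' α Z ZT) {F : RPath l d → ℝ≥0∞} (hF : Hom l d α F)
    (h : Tsp l) :
    ∫⁻ ω, F (shift h (ZT ω)) ∂P' = ∫⁻ ω, F (ZT ω) ∂P' := by
  rw [← hZT.2 F hF h, hZT.2 F hF 0]
  simp only [shift_zero]

theorem stmt0_general {Ω : Type*} [MeasurableSpace Ω] (P : Measure Ω)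
    [IsProbabilityMeasure P]
    {l d : ℕ} (α : ℝ) (hα : 0 < α)
    (Z : Ω → RPath l d)
    (hne : ∃ ZT : Ω → RPath l d, MemC P P α Z ZT) :
    ∃ Zstar : Ω → RPath l d, MemC P P α Z Zstar ∧
      ∀ t : Tsp l,
        Tendsto (fun s : Tsp l => ∫⁻ ω, ENNReal.ofReal (‖Zstar ω s - Zstar ω t‖ ^ α) ∂P)
          (𝓝 t) (𝓝 0) := by
  obtain ⟨ZT, hZT⟩ := hne
  have hstat : ∀ s t h : Tsp l,
      ∫⁻ ω, ‖ZT ω (s + h) - ZT ω (t + h)‖ₑ ^ α ∂P = ∫⁻ ω, ‖ZT ω s - ZT ω t‖ₑ ^ α ∂P := by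
    intro s t h
    have hF := hom_ofReal_norm_rpow (α := α) (L := fun f : RPath l d => f s - f t)
      ((measurable_pi_apply s).sub (measurable_pi_apply t))
      fun c f => (smul_sub c (f s) (f t)).symm
    simpa [shift, ofReal_norm_rpow hα.le] using hZT.lintegral_shift hF (-h)
  have hmoment : ∀ t : Tsp l, ∫⁻ ω, ‖ZT ω t‖ₑ ^ α ∂P ≤ 1 := by
    intro t
    have hF := hom_ofReal_norm_rpow (α := α) (L := fun f : RPath l d => f 0)
      (measurable_pi_apply 0)
      fun c f => rfl
    have h := (hZT.lintegral_shift hF (-t)).trans hZT.1.2.1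
    simp only [shift, zero_sub, neg_neg, ofReal_norm_rpow hα.le] at h
    exact h.le
  refine ⟨ZT, hZT, fun t => ?_⟩
  simpa only [ofReal_norm_rpow hα.le] using
    tendsto_lintegral_enorm_sub_rpow_of_stationary_increments hα hZT.1.1 hstat
      ENNReal.one_ne_top hmoment t

/-- a nonempty class `C[Z]` contains an `L^α`-continuous element. -/
theorem stmt0 {Ω : Type*} [MeasurableSpace Ω] (P : Measure Ω)
    [IsProbabilityMeasure P] (hPc : P.IsComplete) [NullSingletonClass P]
    {l d : ℕ} (hl : 1 ≤ l) (hd : 1 ≤ d) (α : ℝ) (hα : 0 < α)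
    (Z : Ω → RPath l d) (hZ : StarC P α Z)
    (hne : ∃ ZT : Ω → RPath l d, MemC P P α Z ZT) :
    ∃ Zstar : Ω → RPath l d, MemC P P α Z Zstar ∧
      ∀ t : Tsp l,
        Tendsto (fun s : Tsp l => ∫⁻ ω, ENNReal.ofReal (‖Zstar ω s - Zstar ω t‖ ^ α) ∂P)
          (𝓝 t) (𝓝 0) :=
  stmt0_general P α hα Z hne
end
end

section
/- Let Θ be a spectral tail RF and let R be an α-Pareto random variable independent of Θ, defined on the same probability space. Then the RF Y(t) = R Θ(t) satisfies: ‖Y(0)‖ > 1 almost surely, S(Y) > 0 almost surely, and for every product-measurable Γ : D → [0, ∞], every h ∈ T and every x > 0, E[Γ(x B^h Y) 1{x ‖Y(−h)‖ > 1}] = x^α E[Γ(Y) 1{‖Y(h)‖ > x}]. -/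
open MeasureTheory ProbabilityTheory Filter
open scoped ENNReal Topology

noncomputable section

/-- A spectral tail random field. -/
def SpectralTail {Ω : Type*} [MeasurableSpace Ω] (P : Measure Ω) {l d : ℕ} (α : ℝ)
    (Θ : Ω → RPath l d) : Prop :=
  JointlyMeasurable Θ ∧
  P {ω | ‖Θ ω 0‖ = 1} = 1 ∧
  P {ω | 0 < Sfun α (Θ ω)} = 1 ∧
  ∀ Γ : RPath l d → ℝ≥0∞, Hom l d 0 Γ → ∀ h : Tsp l,
    (∫⁻ ω, ENNReal.ofReal (‖Θ ω h‖ ^ α) * Γ (Θ ω) ∂P) =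
    ∫⁻ ω, (if ‖Θ ω (-h)‖ ≠ 0 then 1 else 0) * Γ (shift h (Θ ω)) ∂P


/-!
By independence and Fubini, both sides of the tail identity are expectations over `Θ` of
integrals along the ray `r ↦ r Θ` against the Pareto law `α r^(-α-1) dr` on `(1, ∞)`. As
`‖Θ(0)‖ = 1`, the cut-off `r > 1` is an exceedance indicator at `0`, so both integrals extend
to the measure `α u^(-α-1) du` on `(0, ∞)`, and they turn into the one functional
`F(f) = ∫ Γ(x u f) 1{x u ‖f(0)‖ > 1} 1{u ‖f(h)‖ > 1} α u^(-α-1) du`: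
the left side is `E F(B^h Θ)`, and the right side is `E F(Θ)` after substituting `r = x u`,
which produces the factor `x^α`. Since `α u^(-α-1) du` scales by `c^α` under `u ↦ c u`,
`F` is `α`-homogeneous, so `F(f) / ‖f(h)‖^α` is `0`-homogeneous, and the spectral tail
identity applied to it gives `E F(Θ) = E F(B^h Θ)`.
-/

open Set

def homogeneousMeasure (α : ℝ) : Measure ℝ :=
  (volume.restrict (Ioi 0)).withDensity fun u => ENNReal.ofReal (α * u ^ (-(α + 1)))

section HomogeneousMeasure

variable {α : ℝ}

instance : SFinite (homogeneousMeasure α) := by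
  unfold homogeneousMeasure; infer_instance

lemma ae_pos_homogeneousMeasure : ∀ᵐ u ∂homogeneousMeasure α, 0 < u :=
  (withDensity_absolutelyContinuous _ _).ae_le (ae_restrict_mem measurableSet_Ioi)

lemma homogeneousMeasure_Ioi (hα : 0 < α) {s : ℝ} (hs : 0 < s) :
    homogeneousMeasure α (Ioi s) = ENNReal.ofReal (s ^ (-α)) := by
  rw [homogeneousMeasure, withDensity_apply _ measurableSet_Ioi,
    Measure.restrict_restrict measurableSet_Ioi, Ioi_inter_Ioi, sup_eq_left.2 hs.le,
    ← ofReal_integral_eq_lintegral_ofReal]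
  · rw [integral_const_mul, integral_Ioi_rpow_of_lt (by linarith) hs,
      show -(α + 1) + 1 = -α by ring]
    field_simp
  · exact (integrableOn_Ioi_rpow_of_lt (by linarith) hs).const_mul α
  · filter_upwards [ae_restrict_mem measurableSet_Ioi] with u hu
    have : 0 < u := hs.trans hu
    positivity

lemma setLIntegral_Ioi_zero_comp_mul_left {c : ℝ} (hc : 0 < c) (ψ : ℝ → ℝ≥0∞) :
    ∫⁻ u in Ioi 0, ψ (c * u) = ENNReal.ofReal c⁻¹ * ∫⁻ u in Ioi 0, ψ u := by
  have hmul : MeasurableEmbedding (c * ·) := (Homeomorph.mulLeft₀ c hc.ne').measurableEmbedding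
  have hpre : (c * ·) ⁻¹' Ioi 0 = Ioi (0 : ℝ) := by
    ext u; simp [mul_pos_iff_of_pos_left hc]
  have hmap : (volume.restrict (Ioi 0)).map (c * ·) =
      ENNReal.ofReal c⁻¹ • volume.restrict (Ioi (0 : ℝ)) := by
    conv_lhs => rw [← hpre]
    rw [← Measure.restrict_map hmul.measurable measurableSet_Ioi, Real.map_volume_mul_left hc.ne',
      abs_of_pos (inv_pos.2 hc), Measure.restrict_smul]
  rw [← hmul.lintegral_map, hmap, lintegral_smul_measure, smul_eq_mul]

lemma lintegral_comp_mul_left_homogeneousMeasure {c : ℝ} (hc : 0 < c) {ψ : ℝ → ℝ≥0∞}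
    (hψ : Measurable ψ) :
    ∫⁻ u, ψ (c * u) ∂homogeneousMeasure α =
      ENNReal.ofReal (c ^ α) * ∫⁻ u, ψ u ∂homogeneousMeasure α := by
  rw [homogeneousMeasure]
  set ρ : ℝ → ℝ≥0∞ := fun u => ENNReal.ofReal (α * u ^ (-(α + 1))) with hρ
  have hρm : Measurable ρ := by fun_prop
  have hρc : ∀ u, 0 < u → ρ u = ENNReal.ofReal (c ^ (α + 1)) * ρ (c * u) := fun u hu => by
    rw [hρ, ← ENNReal.ofReal_mul (by positivity), Real.mul_rpow hc.le hu.le, Real.rpow_neg hc.le]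
    field_simp
  have hψc : Measurable fun u => ψ (c * u) := hψ.comp (measurable_const_mul c)
  rw [lintegral_withDensity_eq_lintegral_mul _ hρm hψc,
    lintegral_withDensity_eq_lintegral_mul _ hρm hψ]
  calc ∫⁻ u in Ioi 0, (ρ * fun u => ψ (c * u)) u
      = ∫⁻ u in Ioi 0, ENNReal.ofReal (c ^ (α + 1)) * (ρ * ψ) (c * u) :=
        setLIntegral_congr_fun measurableSet_Ioi fun u hu => by
          simp only [Pi.mul_apply, hρc u hu, mul_assoc]
    _ = ENNReal.ofReal (c ^ (α + 1)) * ENNReal.ofReal c⁻¹ * ∫⁻ u in Ioi 0, (ρ * ψ) u := by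
        rw [lintegral_const_mul' _ _ ENNReal.ofReal_ne_top,
          setLIntegral_Ioi_zero_comp_mul_left hc, mul_assoc]
    _ = ENNReal.ofReal (c ^ α) * ∫⁻ u in Ioi 0, (ρ * ψ) u := by
        rw [← ENNReal.ofReal_mul (by positivity), Real.rpow_add_one hc.ne',
          mul_inv_cancel_right₀ hc.ne']

lemma paretoMeasure_one_eq_restrict (α : ℝ) :
    paretoMeasure 1 α = (homogeneousMeasure α).restrict (Ioi 1) := by
  have hpdf : paretoPDF 1 α =
      (Ici 1).indicator fun u => ENNReal.ofReal (α * u ^ (-(α + 1))) := by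
    ext u
    by_cases hu : 1 ≤ u <;> simp [paretoPDF_eq, hu]
  rw [paretoMeasure, hpdf, withDensity_indicator measurableSet_Ici, homogeneousMeasure,
    restrict_withDensity measurableSet_Ioi, Measure.restrict_restrict measurableSet_Ioi,
    Ioi_inter_Ioi, sup_eq_left.2 zero_le_one, Measure.restrict_congr_set Ioi_ae_eq_Ici]

end HomogeneousMeasure

section Probability

variable {Ω : Type*} [MeasurableSpace Ω] {P : Measure Ω} [IsProbabilityMeasure P]

lemma measure_setOf_eq_one_of_ae {p : Ω → Prop} (hp : ∀ᵐ ω ∂P, p ω) : P {ω | p ω} = 1 :=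
  (measure_congr (ae_eq_univ.2 (ae_iff.1 hp))).trans measure_univ

lemma map_eq_paretoMeasure_of_tail {α : ℝ} (hα : 0 < α) {R : Ω → ℝ} (hR : Measurable R)
    (hRtail : ∀ s : ℝ, 1 ≤ s → P {ω | s < R ω} = ENNReal.ofReal (s ^ (-α))) :
    P.map R = paretoMeasure 1 α := by
  have := isProbabilityMeasure_paretoMeasure one_pos hα
  have := Measure.isProbabilityMeasure_map (μ := P) hR.aemeasurable
  have htail : ∀ s, 1 ≤ s → P.map R (Ioi s) = paretoMeasure 1 α (Ioi s) := fun s hs => by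
    rw [Measure.map_apply hR measurableSet_Ioi, paretoMeasure_one_eq_restrict,
      Measure.restrict_apply measurableSet_Ioi, Ioi_inter_Ioi, sup_eq_left.2 hs,
      homogeneousMeasure_Ioi hα (zero_lt_one.trans_le hs)]
    exact hRtail s hs
  have htail_one : P.map R (Ioi 1) = 1 := by
    rw [htail 1 le_rfl, paretoMeasure_one_eq_restrict, Measure.restrict_apply measurableSet_Ioi,
      inter_self, homogeneousMeasure_Ioi hα one_pos, Real.one_rpow, ENNReal.ofReal_one]
  have hIoi : ∀ s, P.map R (Ioi s) = paretoMeasure 1 α (Ioi s) := fun s => by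
    rcases le_or_gt 1 s with hs | hs
    · exact htail s hs
    · have hsub : Ioi 1 ⊆ Ioi s := Ioi_subset_Ioi hs.le
      rw [one_le_prob_iff.1 (htail_one.symm.trans_le (measure_mono hsub)),
        one_le_prob_iff.1 ((htail_one.symm.trans (htail 1 le_rfl)).trans_le (measure_mono hsub))]
  refine Measure.ext_of_Iic _ _ fun a => ?_
  rw [← compl_Ioi, prob_compl_eq_one_sub measurableSet_Ioi,
    prob_compl_eq_one_sub measurableSet_Ioi, hIoi a]

lemma ProbabilityTheory.IndepFun.lintegral_comp_prodMk {α β : Type*}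
    [MeasurableSpace α] [MeasurableSpace β]
    {X : Ω → α} {Z : Ω → β} (hX : Measurable X) (hZ : Measurable Z) (hXZ : IndepFun X Z P)
    {Φ : α × β → ℝ≥0∞} (hΦ : Measurable Φ) :
    ∫⁻ ω, Φ (X ω, Z ω) ∂P = ∫⁻ ω, ∫⁻ a, Φ (a, Z ω) ∂(P.map X) ∂P := by
  have := Measure.isProbabilityMeasure_map (μ := P) hX.aemeasurable
  have := Measure.isProbabilityMeasure_map (μ := P) hZ.aemeasurable
  rw [← lintegral_map hΦ (hX.prodMk hZ),
    (indepFun_iff_map_prod_eq_prod_map_map hX.aemeasurable hZ.aemeasurable).1 hXZ,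
    lintegral_prod_symm' Φ hΦ, lintegral_map hΦ.lintegral_prod_left' hZ]

end Probability

lemma measurable_ite_lt {β : Type*} [MeasurableSpace β] {φ : β → ℝ} (hφ : Measurable φ) (a : ℝ) :
    Measurable fun b => if a < φ b then (1 : ℝ≥0∞) else 0 :=
  Measurable.ite (measurableSet_lt measurable_const hφ) measurable_const measurable_const

section PathSpace

variable {l d : ℕ}

lemma JointlyMeasurable.measurable_apply {Ω : Type*} [MeasurableSpace Ω] {Z : Ω → RPath l d}
    (hZ : JointlyMeasurable Z) (t : Tsp l) : Measurable fun ω => Z ω t :=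
  hZ.comp (measurable_id.prodMk measurable_const)

lemma JointlyMeasurable.measurable {Ω : Type*} [MeasurableSpace Ω] {Z : Ω → RPath l d}
    (hZ : JointlyMeasurable Z) : Measurable Z :=
  measurable_pi_lambda _ hZ.measurable_apply

lemma JointlyMeasurable.measurable_Sfun {Ω : Type*} [MeasurableSpace Ω] {Z : Ω → RPath l d}
    (hZ : JointlyMeasurable Z) (α : ℝ) : Measurable fun ω => Sfun α (Z ω) :=
  (hZ.norm.pow_const α).ennreal_ofReal.lintegral_prod_right'

lemma Sfun_smul (α : ℝ) {c : ℝ} (hc : 0 ≤ c) (f : RPath l d) :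
    Sfun α (c • f) = ENNReal.ofReal (c ^ α) * Sfun α f := by
  rw [Sfun, Sfun, ← lintegral_const_mul' _ _ ENNReal.ofReal_ne_top]
  congr 1 with t
  rw [Pi.smul_apply, norm_smul, Real.norm_of_nonneg hc, Real.mul_rpow hc (norm_nonneg _),
    ENNReal.ofReal_mul (by positivity)]

lemma measurable_shift (h : Tsp l) : Measurable (shift h : RPath l d → RPath l d) :=
  measurable_pi_lambda _ fun t => measurable_pi_apply (t - h)

lemma measurable_smul_path : Measurable fun p : ℝ × RPath l d => p.1 • p.2 :=
  measurable_pi_lambda _ fun t => measurable_fst.smul ((measurable_pi_apply t).comp measurable_snd)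

def rayIntegral (α : ℝ) (G : RPath l d → ℝ≥0∞) (f : RPath l d) : ℝ≥0∞ :=
  ∫⁻ u, G (u • f) ∂homogeneousMeasure α

lemma hom_rayIntegral {α : ℝ} {G : RPath l d → ℝ≥0∞} (hG : Measurable G) :
    Hom l d α (rayIntegral α G) := by
  refine ⟨(hG.comp measurable_smul_path).lintegral_prod_left', fun c hc f => ?_⟩
  have hGf : Measurable fun u : ℝ => G (u • f) := hG.comp (measurable_id.smul_const f)
  rw [rayIntegral, rayIntegral, ← lintegral_comp_mul_left_homogeneousMeasure hc hGf]
  congr 1 with u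
  rw [mul_comm, mul_smul]
  rfl

lemma Hom.mul_inv_norm_rpow {α : ℝ} {F : RPath l d → ℝ≥0∞} (hF : Hom l d α F) (h : Tsp l) :
    Hom l d 0 fun f => F f * (ENNReal.ofReal (‖f h‖ ^ α))⁻¹ := by
  refine ⟨hF.1.mul ((measurable_pi_apply h).norm.pow_const α).ennreal_ofReal.inv,
    fun c hc f => ?_⟩
  have hcα : ENNReal.ofReal (c ^ α) ≠ 0 := (ENNReal.ofReal_pos.2 (by positivity)).ne'
  dsimp only
  rw [hF.2 c hc f, Real.rpow_zero, ENNReal.ofReal_one, one_mul, norm_smul,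
    Real.norm_of_nonneg hc.le, Real.mul_rpow hc.le (norm_nonneg _),
    ENNReal.ofReal_mul (by positivity), ENNReal.mul_inv (Or.inl hcα) (Or.inl ENNReal.ofReal_ne_top),
    mul_mul_mul_comm, ENNReal.mul_inv_cancel hcα ENNReal.ofReal_ne_top, one_mul]

end PathSpace

section Exceedance

variable {l d : ℕ} {α x : ℝ} {h : Tsp l} {Γ : RPath l d → ℝ≥0∞}

def exceedanceIntegrand (x : ℝ) (h : Tsp l) (Γ : RPath l d → ℝ≥0∞) (g : RPath l d) : ℝ≥0∞ :=
  Γ (x • g) * (if 1 < x * ‖g 0‖ then 1 else 0) * (if 1 < ‖g h‖ then 1 else 0)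

lemma measurable_exceedanceIntegrand (hΓ : Measurable Γ) :
    Measurable (exceedanceIntegrand x h Γ) :=
  ((hΓ.comp (measurable_const_smul x)).mul (measurable_ite_lt (by fun_prop) _)).mul
    (measurable_ite_lt (by fun_prop) _)

lemma rayIntegral_exceedanceIntegrand_eq_zero {f : RPath l d} (hf : f 0 = 0 ∨ f h = 0) :
    rayIntegral α (exceedanceIntegrand x h Γ) f = 0 := by
  rcases hf with hf | hf <;> norm_num [rayIntegral, exceedanceIntegrand, hf]

lemma lintegral_paretoMeasure_eq_rayIntegral_shift {f : RPath l d} (hf : ‖f 0‖ = 1) :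
    ∫⁻ r, Γ (x • r • shift h f) * (if 1 < x * ‖r • f (-h)‖ then 1 else 0)
        ∂paretoMeasure 1 α =
      rayIntegral α (exceedanceIntegrand x h Γ) (shift h f) := by
  rw [paretoMeasure_one_eq_restrict, ← lintegral_indicator measurableSet_Ioi, rayIntegral]
  refine lintegral_congr_ae (ae_pos_homogeneousMeasure.mono fun u hu => ?_)
  simp only [exceedanceIntegrand, indicator_apply, mem_Ioi, shift, Pi.smul_apply, sub_self,
    zero_sub, norm_smul, Real.norm_of_nonneg hu.le, hf, mul_one]
  split_ifs <;> simp

lemma rayIntegral_exceedanceIntegrand (hΓ : Measurable Γ) (hx : 0 < x) {f : RPath l d}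
    (hf : ‖f 0‖ = 1) :
    rayIntegral α (exceedanceIntegrand x h Γ) f =
      ENNReal.ofReal (x ^ α) *
        ∫⁻ r, Γ (r • f) * (if x < ‖r • f h‖ then 1 else 0) ∂paretoMeasure 1 α := by
  have hψ : Measurable fun r : ℝ => Γ (r • f) * (if x < ‖r • f h‖ then 1 else 0) :=
    (hΓ.comp (measurable_id.smul_const f)).mul (measurable_ite_lt (by fun_prop) x)
  rw [paretoMeasure_one_eq_restrict, ← lintegral_indicator measurableSet_Ioi,
    ← lintegral_comp_mul_left_homogeneousMeasure hx (hψ.indicator measurableSet_Ioi), rayIntegral]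
  refine lintegral_congr_ae (ae_pos_homogeneousMeasure.mono fun u hu => ?_)
  have hexc : x < x * u * ‖f h‖ ↔ 1 < u * ‖f h‖ := by
    rw [mul_assoc, lt_mul_iff_one_lt_right hx]
  simp only [exceedanceIntegrand, indicator_apply, mem_Ioi, Pi.smul_apply, norm_smul,
    Real.norm_of_nonneg hu.le, Real.norm_of_nonneg (mul_pos hx hu).le, hf, mul_one, hexc, smul_smul]
  split_ifs <;> simp

end Exceedance

section SpectralTail

variable {Ω : Type*} [MeasurableSpace Ω] {P : Measure Ω} [IsProbabilityMeasure P]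
  {l d : ℕ} {α : ℝ} {Θ : Ω → RPath l d}

lemma SpectralTail.ae_norm_apply_zero_eq_one (hΘ : SpectralTail P α Θ) :
    ∀ᵐ ω ∂P, ‖Θ ω 0‖ = 1 :=
  (mem_ae_iff_prob_eq_one
    (measurableSet_eq_fun (hΘ.1.measurable_apply 0).norm measurable_const)).2 hΘ.2.1

lemma SpectralTail.ae_Sfun_pos (hΘ : SpectralTail P α Θ) : ∀ᵐ ω ∂P, 0 < Sfun α (Θ ω) :=
  (mem_ae_iff_prob_eq_one (measurableSet_lt measurable_const (hΘ.1.measurable_Sfun α))).2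
    hΘ.2.2.1

lemma SpectralTail.lintegral_eq_lintegral_shift (hα : 0 < α) (hΘ : SpectralTail P α Θ)
    {F : RPath l d → ℝ≥0∞} (hF : Hom l d α F) (h : Tsp l)
    (hF_h : ∀ f : RPath l d, f h = 0 → F f = 0) (hF_0 : ∀ f : RPath l d, f 0 = 0 → F f = 0) :
    ∫⁻ ω, F (Θ ω) ∂P = ∫⁻ ω, F (shift h (Θ ω)) ∂P := by
  set Γ : RPath l d → ℝ≥0∞ := fun f => F f * (ENNReal.ofReal (‖f h‖ ^ α))⁻¹
  -- at `f h = 0` the left side is `0 * (F f * ⊤) = 0`, hence the need for `hF_h`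
  have hcancel : ∀ f, ENNReal.ofReal (‖f h‖ ^ α) * Γ f = F f := fun f => by
    by_cases hf : f h = 0
    · simp [Γ, hf, hF_h f hf, Real.zero_rpow hα.ne']
    · have hpos : ENNReal.ofReal (‖f h‖ ^ α) ≠ 0 :=
        (ENNReal.ofReal_pos.2 (Real.rpow_pos_of_pos (norm_pos_iff.2 hf) α)).ne'
      simp only [Γ]
      rw [mul_comm (F f), ← mul_assoc, ENNReal.mul_inv_cancel hpos ENNReal.ofReal_ne_top,
        one_mul]
  calc ∫⁻ ω, F (Θ ω) ∂P = ∫⁻ ω, ENNReal.ofReal (‖Θ ω h‖ ^ α) * Γ (Θ ω) ∂P := by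
        simp only [hcancel]
    _ = ∫⁻ ω, (if ‖Θ ω (-h)‖ ≠ 0 then 1 else 0) * Γ (shift h (Θ ω)) ∂P :=
        hΘ.2.2.2 Γ (hF.mul_inv_norm_rpow h) h
    _ = ∫⁻ ω, F (shift h (Θ ω)) ∂P :=
        lintegral_congr_ae <| hΘ.ae_norm_apply_zero_eq_one.mono fun ω hω => by
          by_cases h0 : Θ ω (-h) = 0
          · simp [h0, hF_0 _ (show shift h (Θ ω) 0 = 0 by simpa [shift] using h0)]
          · simp [Γ, h0, shift, hω]

lemma SpectralTail.lintegral_tail_identity (hα : 0 < α) (hΘ : SpectralTail P α Θ)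
    {R : Ω → ℝ} (hR : Measurable R) (hRlaw : P.map R = paretoMeasure 1 α)
    (hRΘ : IndepFun R Θ P) {Γ : RPath l d → ℝ≥0∞} (hΓ : Measurable Γ) (h : Tsp l) {x : ℝ}
    (hx : 0 < x) :
    ∫⁻ ω, Γ (x • shift h (R ω • Θ ω)) * (if 1 < x * ‖R ω • Θ ω (-h)‖ then 1 else 0) ∂P =
      ENNReal.ofReal (x ^ α) * ∫⁻ ω, Γ (R ω • Θ ω) * (if x < ‖R ω • Θ ω h‖ then 1 else 0) ∂P := by
  have hΘm := hΘ.1.measurable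
  have hΘ1 := hΘ.ae_norm_apply_zero_eq_one
  have hshift : Measurable fun p : ℝ × RPath l d => x • p.1 • shift h p.2 :=
    (measurable_const_smul x).comp
      (measurable_smul_path.comp (measurable_fst.prodMk ((measurable_shift h).comp measurable_snd)))
  have hF := hom_rayIntegral (α := α) (measurable_exceedanceIntegrand (x := x) (h := h) hΓ)
  calc _ = ∫⁻ ω, ∫⁻ r, Γ (x • r • shift h (Θ ω)) * (if 1 < x * ‖r • Θ ω (-h)‖ then 1 else 0)
          ∂paretoMeasure 1 α ∂P := by
        rw [← hRlaw]
        exact hRΘ.lintegral_comp_prodMk hR hΘm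
          (Φ := fun p => Γ (x • p.1 • shift h p.2) * (if 1 < x * ‖p.1 • p.2 (-h)‖ then 1 else 0))
          ((hΓ.comp hshift).mul (measurable_ite_lt (by fun_prop) 1))
    _ = ∫⁻ ω, rayIntegral α (exceedanceIntegrand x h Γ) (shift h (Θ ω)) ∂P :=
        lintegral_congr_ae (hΘ1.mono fun ω => lintegral_paretoMeasure_eq_rayIntegral_shift)
    _ = ∫⁻ ω, rayIntegral α (exceedanceIntegrand x h Γ) (Θ ω) ∂P :=
        (hΘ.lintegral_eq_lintegral_shift hα hF h
          (fun _ hf => rayIntegral_exceedanceIntegrand_eq_zero (Or.inr hf))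
          (fun _ hf => rayIntegral_exceedanceIntegrand_eq_zero (Or.inl hf))).symm
    _ = ∫⁻ ω, ENNReal.ofReal (x ^ α) *
          ∫⁻ r, Γ (r • Θ ω) * (if x < ‖r • Θ ω h‖ then 1 else 0) ∂paretoMeasure 1 α ∂P :=
        lintegral_congr_ae (hΘ1.mono fun ω => rayIntegral_exceedanceIntegrand hΓ hx)
    _ = _ := by
        rw [lintegral_const_mul' _ _ ENNReal.ofReal_ne_top, ← hRlaw]
        congr 1
        exact (hRΘ.lintegral_comp_prodMk hR hΘm
          (Φ := fun p => Γ (p.1 • p.2) * (if x < ‖p.1 • p.2 h‖ then 1 else 0))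
          ((hΓ.comp measurable_smul_path).mul (measurable_ite_lt (by fun_prop) x))).symm

end SpectralTail

theorem stmt15_general {Ω : Type*} [MeasurableSpace Ω] (P : Measure Ω)
    [IsProbabilityMeasure P]
    {l d : ℕ} (α : ℝ) (hα : 0 < α)
    (Θ : Ω → RPath l d) (hΘ : SpectralTail P α Θ)
    (R : Ω → ℝ) (hRm : Measurable R)
    (hRlaw : ∀ s : ℝ, 1 ≤ s → P {ω | s < R ω} = ENNReal.ofReal (s ^ (-α)))
    (hindep : IndepFun R Θ P)
    (Y : Ω → RPath l d) (hYdef : Y = fun ω t => R ω • Θ ω t) :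
    P {ω | 1 < ‖Y ω 0‖} = 1 ∧
    P {ω | 0 < Sfun α (Y ω)} = 1 ∧
    ∀ Γ : RPath l d → ℝ≥0∞, Measurable Γ → ∀ h : Tsp l, ∀ x : ℝ, 0 < x →
      (∫⁻ ω, Γ (fun t => x • shift h (Y ω) t) *
          (if 1 < x * ‖Y ω (-h)‖ then 1 else 0) ∂P) =
      ENNReal.ofReal (x ^ α) *
        ∫⁻ ω, Γ (Y ω) * (if x < ‖Y ω h‖ then 1 else 0) ∂P := by
  subst hYdef
  have hR1 : ∀ᵐ ω ∂P, 1 < R ω := (mem_ae_iff_prob_eq_one (measurableSet_lt measurable_const hRm)).2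
    (by simpa using hRlaw 1 le_rfl)
  refine ⟨measure_setOf_eq_one_of_ae ?_, measure_setOf_eq_one_of_ae ?_, fun Γ hΓ h x hx =>
    hΘ.lintegral_tail_identity hα hRm (map_eq_paretoMeasure_of_tail hα hRm hRlaw) hindep hΓ h hx⟩
  · filter_upwards [hR1, hΘ.ae_norm_apply_zero_eq_one] with ω hR hΘω
    rwa [norm_smul, hΘω, mul_one, Real.norm_of_nonneg (by linarith)]
  · filter_upwards [hR1, hΘ.ae_Sfun_pos] with ω hR hSΘ
    rw [show (fun t => R ω • Θ ω t) = R ω • Θ ω from rfl, Sfun_smul α (by linarith)]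
    exact ENNReal.mul_pos (ENNReal.ofReal_pos.2 (by positivity)).ne' hSΘ.ne'

/-- if `Θ` is a spectral tail RF and `R` is α-Pareto independent of
`Θ`, then `Y = RΘ` satisfies `‖Y(0)‖ > 1` a.s., `S(Y) > 0` a.s., and the
fundamental tail identity. -/
theorem stmt15 {Ω : Type*} [MeasurableSpace Ω] (P : Measure Ω)
    [IsProbabilityMeasure P] (hPc : P.IsComplete)
    {l d : ℕ} (hl : 1 ≤ l) (hd : 1 ≤ d) (α : ℝ) (hα : 0 < α)
    (Θ : Ω → RPath l d) (hΘ : SpectralTail P α Θ)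
    (R : Ω → ℝ) (hRm : Measurable R)
    (hRlaw : ∀ s : ℝ, 1 ≤ s → P {ω | s < R ω} = ENNReal.ofReal (s ^ (-α)))
    (hindep : IndepFun R Θ P)
    (Y : Ω → RPath l d) (hYdef : Y = fun ω t => R ω • Θ ω t) :
    P {ω | 1 < ‖Y ω 0‖} = 1 ∧
    P {ω | 0 < Sfun α (Y ω)} = 1 ∧
    ∀ Γ : RPath l d → ℝ≥0∞, Measurable Γ → ∀ h : Tsp l, ∀ x : ℝ, 0 < x →
      (∫⁻ ω, Γ (fun t => x • shift h (Y ω) t) *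
          (if 1 < x * ‖Y ω (-h)‖ then 1 else 0) ∂P) =
      ENNReal.ofReal (x ^ α) *
        ∫⁻ ω, Γ (Y ω) * (if x < ‖Y ω h‖ then 1 else 0) ∂P :=
  stmt15_general P α hα Θ hΘ R hRm hRlaw hindep Y hYdef
end
end

section
/- Let W : Ω₁ × ℝ^ℓ → [0, ∞) and W' : Ω₂ × ℝ^ℓ → [0, ∞) be jointly measurable random fields on complete probability spaces (Ω₁, F₁, P₁) and (Ω₂, F₂, P₂), each satisfying ∫_{[−m, m]^ℓ} E[W(t)] λ(dt) ∈ (0, ∞) and ∫_{[−m, m]^ℓ} E[W'(t)] λ(dt) ∈ (0, ∞) for every positive integer m. If W and W' have the same finite-dimensional distributions (for every n and every t₁, …, t_n ∈ ℝ^ℓ, the random vectors (W(t₁), …, W(t_n)) and (W'(t₁), …, W'(t_n)) have the same law), then the [0, ∞]-valued random variables ∫_{ℝ^ℓ} W(t) λ(dt) and ∫_{ℝ^ℓ} W'(t) λ(dt) have the same distribution. In particular, for every h ∈ ℝ^ℓ, ∫_{ℝ^ℓ} W(t − h) λ(dt) has the same distribution as ∫_{ℝ^ℓ} W(t) λ(dt).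 -/
open MeasureTheory ProbabilityTheory Filter
open scoped ENNReal Topology

noncomputable section

/-!
Truncate the area under the graph of `W ω` to a set `K ⊆ T × ℝ` of finite measure. By Tonelli,
the `n`-th moment of the truncated area `A_K(ω)` is the integral over `Kⁿ` of
`P(0 < yᵢ < W(tᵢ) for all i)`, which only depends on the finite-dimensional distributions. As
`A_K` is bounded, its moments determine its law (Weierstrass approximation). When `K` increases to
`T × ℝ`, `A_K` increases to `∫ W`, so the law of `∫ W` is determined as well. Shift invariance is
the translation invariance of Lebesgue measure.
-/

namespace MeasureTheory

section Moments

variable {ρ ρ' : Measure ℝ} [IsFiniteMeasure ρ] [IsFiniteMeasure ρ'] {a b : ℝ}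

lemma integrable_of_continuous_of_ae_mem_Icc (hρ : ∀ᵐ x ∂ρ, x ∈ Set.Icc a b) {g : ℝ → ℝ}
    (hg : Continuous g) : Integrable g ρ := by
  obtain ⟨C, hC⟩ := isCompact_Icc.exists_bound_of_continuousOn hg.continuousOn
  exact .of_bound hg.aestronglyMeasurable C (hρ.mono hC)

lemma integral_eval_eq_of_integral_pow_eq (hρ : ∀ᵐ x ∂ρ, x ∈ Set.Icc a b)
    (hρ' : ∀ᵐ x ∂ρ', x ∈ Set.Icc a b) (hmom : ∀ n : ℕ, ∫ x, x ^ n ∂ρ = ∫ x, x ^ n ∂ρ')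
    (p : Polynomial ℝ) : ∫ x, p.eval x ∂ρ = ∫ x, p.eval x ∂ρ' := by
  induction p using Polynomial.induction_on' with
  | add p q hp hq =>
    simp only [Polynomial.eval_add]
    rw [integral_add, integral_add, hp, hq] <;>
      exact integrable_of_continuous_of_ae_mem_Icc ‹_› (Polynomial.continuous _)
  | monomial n c => simp only [Polynomial.eval_monomial, integral_const_mul, hmom n]

lemma integral_eq_of_integral_pow_eq (hρ : ∀ᵐ x ∂ρ, x ∈ Set.Icc a b)
    (hρ' : ∀ᵐ x ∂ρ', x ∈ Set.Icc a b) (hmom : ∀ n : ℕ, ∫ x, x ^ n ∂ρ = ∫ x, x ^ n ∂ρ')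
    {g : ℝ → ℝ} (hg : Continuous g) : ∫ x, g x ∂ρ = ∫ x, g x ∂ρ' := by
  set M := ρ.real Set.univ + ρ'.real Set.univ + 1
  have hM : 0 < M := by positivity
  refine eq_of_forall_dist_le fun ε hε => ?_
  obtain ⟨p, hp⟩ :=
    exists_polynomial_near_of_continuousOn a b g hg.continuousOn (ε / M) (div_pos hε hM)
  have bound : ∀ (σ : Measure ℝ) [IsFiniteMeasure σ], (∀ᵐ x ∂σ, x ∈ Set.Icc a b) →
      dist (∫ x, g x ∂σ) (∫ x, p.eval x ∂σ) ≤ ε / M * σ.real Set.univ := by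
    intro σ _ hσ
    rw [dist_eq_norm, ← integral_sub (integrable_of_continuous_of_ae_mem_Icc hσ hg)
      (integrable_of_continuous_of_ae_mem_Icc hσ p.continuous)]
    refine norm_integral_le_of_norm_le_const (hσ.mono fun x hx => ?_)
    rw [Real.norm_eq_abs, abs_sub_comm]
    exact (hp x hx).le
  calc dist (∫ x, g x ∂ρ) (∫ x, g x ∂ρ')
      ≤ dist (∫ x, g x ∂ρ) (∫ x, p.eval x ∂ρ) + dist (∫ x, g x ∂ρ') (∫ x, p.eval x ∂ρ') := by
        rw [dist_comm (∫ x, g x ∂ρ'), ← integral_eval_eq_of_integral_pow_eq hρ hρ' hmom p]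
        exact dist_triangle _ _ _
    _ ≤ ε / M * ρ.real Set.univ + ε / M * ρ'.real Set.univ :=
        add_le_add (bound ρ hρ) (bound ρ' hρ')
    _ ≤ ε := by
        rw [← mul_add, div_mul_eq_mul_div, div_le_iff₀ hM]
        nlinarith

theorem Measure.ext_of_integral_pow_eq (hρ : ∀ᵐ x ∂ρ, x ∈ Set.Icc a b)
    (hρ' : ∀ᵐ x ∂ρ', x ∈ Set.Icc a b) (hmom : ∀ n : ℕ, ∫ x, x ^ n ∂ρ = ∫ x, x ^ n ∂ρ') :
    ρ = ρ' :=
  ext_of_forall_integral_eq_of_IsFiniteMeasure fun f =>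
    integral_eq_of_integral_pow_eq hρ hρ' hmom f.continuous

end Moments

variable {Ω Ω' : Type*} [MeasurableSpace Ω] [MeasurableSpace Ω']

section BoundedENNReal

variable {P : Measure Ω} {X : Ω → ℝ≥0∞} {c : ℝ≥0∞}

lemma ae_map_toReal_mem_Icc (hX : Measurable X) (hc : c ≠ ∞) (hXc : ∀ ω, X ω ≤ c) :
    ∀ᵐ x ∂P.map fun ω => (X ω).toReal, x ∈ Set.Icc 0 c.toReal :=
  (ae_map_iff hX.ennreal_toReal.aemeasurable measurableSet_Icc).2 <|
    .of_forall fun ω => ⟨ENNReal.toReal_nonneg, ENNReal.toReal_mono hc (hXc ω)⟩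

lemma integral_pow_map_toReal (hX : Measurable X) (hc : c ≠ ∞) (hXc : ∀ ω, X ω ≤ c) (n : ℕ) :
    ∫ x, x ^ n ∂P.map (fun ω => (X ω).toReal) = (∫⁻ ω, X ω ^ n ∂P).toReal := by
  rw [integral_map hX.ennreal_toReal.aemeasurable (continuous_pow n).aestronglyMeasurable,
    ← integral_toReal (hX.pow_const n).aemeasurable
      (.of_forall fun ω => ENNReal.pow_lt_top ((hXc ω).trans_lt hc.lt_top))]
  simp only [ENNReal.toReal_pow]

lemma map_ofReal_map_toReal (hX : Measurable X) (hc : c ≠ ∞) (hXc : ∀ ω, X ω ≤ c) :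
    (P.map fun ω => (X ω).toReal).map ENNReal.ofReal = P.map X := by
  rw [Measure.map_map ENNReal.measurable_ofReal hX.ennreal_toReal]
  congr 1
  exact funext fun ω => ENNReal.ofReal_toReal (ne_top_of_le_ne_top hc (hXc ω))

end BoundedENNReal

lemma map_eq_of_lintegral_pow_eq {P : Measure Ω} {P' : Measure Ω'} [IsFiniteMeasure P]
    [IsFiniteMeasure P'] {X : Ω → ℝ≥0∞} {X' : Ω' → ℝ≥0∞} (hX : Measurable X)
    (hX' : Measurable X') {c : ℝ≥0∞} (hc : c ≠ ∞) (hXc : ∀ ω, X ω ≤ c) (hX'c : ∀ ω, X' ω ≤ c)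
    (hmom : ∀ n : ℕ, ∫⁻ ω, X ω ^ n ∂P = ∫⁻ ω, X' ω ^ n ∂P') :
    P.map X = P'.map X' := by
  have hreal : P.map (fun ω => (X ω).toReal) = P'.map (fun ω => (X' ω).toReal) :=
    Measure.ext_of_integral_pow_eq (ae_map_toReal_mem_Icc hX hc hXc)
      (ae_map_toReal_mem_Icc hX' hc hX'c) fun n => by
        rw [integral_pow_map_toReal hX hc hXc, integral_pow_map_toReal hX' hc hX'c, hmom]
  rw [← map_ofReal_map_toReal hX hc hXc, ← map_ofReal_map_toReal hX' hc hX'c, hreal]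

lemma map_iSup_apply_Iic {P : Measure Ω} [IsFiniteMeasure P] {X : ℕ → Ω → ℝ≥0∞}
    (hX : ∀ m, Measurable (X m)) (hXmono : ∀ ω, Monotone fun m => X m ω) (a : ℝ≥0∞) :
    P.map (fun ω => ⨆ m, X m ω) (Set.Iic a) = ⨅ m, P.map (X m) (Set.Iic a) := by
  rw [Measure.map_apply (.iSup hX) measurableSet_Iic]
  simp only [Measure.map_apply (hX _) measurableSet_Iic, Set.preimage, Set.mem_Iic,
    iSup_le_iff, Set.ofPred_forall]
  exact Antitone.measure_iInter (fun m n hmn ω hω => (hXmono ω hmn).trans hω)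
    (fun m => (hX m measurableSet_Iic).nullMeasurableSet) ⟨0, measure_ne_top _ _⟩

lemma map_iSup_eq_of_map_eq {P : Measure Ω} {P' : Measure Ω'} [IsFiniteMeasure P]
    [IsFiniteMeasure P'] {X : ℕ → Ω → ℝ≥0∞} {X' : ℕ → Ω' → ℝ≥0∞} (hX : ∀ m, Measurable (X m))
    (hX' : ∀ m, Measurable (X' m)) (hXmono : ∀ ω, Monotone fun m => X m ω)
    (hX'mono : ∀ ω, Monotone fun m => X' m ω) (hlaw : ∀ m, P.map (X m) = P'.map (X' m)) :
    P.map (fun ω => ⨆ m, X m ω) = P'.map (fun ω => ⨆ m, X' m ω) :=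
  Measure.ext_of_Iic _ _ fun a => by
    simp only [map_iSup_apply_Iic hX hXmono, map_iSup_apply_Iic hX' hX'mono, hlaw]

/-- Robbins' formula. -/
theorem lintegral_measure_prodMk_left_pow {X : Type*} [MeasurableSpace X] (P : Measure Ω)
    [SFinite P] (ν : Measure X) [SigmaFinite ν] {S : Set (Ω × X)} (hS : MeasurableSet S)
    (n : ℕ) :
    ∫⁻ ω, ν (Prod.mk ω ⁻¹' S) ^ n ∂P =
      ∫⁻ x : Fin n → X, P {ω | ∀ i, (ω, x i) ∈ S} ∂Measure.pi fun _ => ν := by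
  set D : Set (Ω × (Fin n → X)) := {r | ∀ i, (r.1, r.2 i) ∈ S}
  have hD : MeasurableSet D := by
    simp only [D, Set.ofPred_forall]
    exact .iInter fun i => (measurable_fst.prodMk ((measurable_pi_apply i).comp measurable_snd)) hS
  calc ∫⁻ ω, ν (Prod.mk ω ⁻¹' S) ^ n ∂P
      = ∫⁻ ω, Measure.pi (fun _ => ν) (Prod.mk ω ⁻¹' D) ∂P := by
        refine lintegral_congr fun ω => ?_
        rw [show Prod.mk ω ⁻¹' D = Set.univ.pi fun _ => Prod.mk ω ⁻¹' S by ext; simp [D],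
          Measure.pi_pi, Finset.prod_const, Finset.card_univ, Fintype.card_fin]
    _ = (P.prod (Measure.pi fun _ => ν)) D := (Measure.prod_apply hD).symm
    _ = ∫⁻ x, P {ω | ∀ i, (ω, x i) ∈ S} ∂Measure.pi fun _ => ν := Measure.prod_apply_symm hD

end MeasureTheory

section Subgraph

variable {Ω T : Type*} [MeasurableSpace Ω] [MeasurableSpace T]

def subgraph (W : Ω → T → ℝ) : Set (Ω × (T × ℝ)) := {q | 0 < q.2.2 ∧ q.2.2 < W q.1 q.2.1}

variable {W : Ω → T → ℝ}

lemma measurableSet_subgraph (hW : Measurable fun p : Ω × T => W p.1 p.2) :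
    MeasurableSet (subgraph W) :=
  (measurableSet_lt measurable_const measurable_snd.snd).inter
    (measurableSet_lt measurable_snd.snd (hW.comp (measurable_fst.prodMk measurable_snd.fst)))

lemma measure_prodMk_subgraph (μ : Measure T) (hW : Measurable fun p : Ω × T => W p.1 p.2)
    (ω : Ω) : μ.prod volume (Prod.mk ω ⁻¹' subgraph W) = ∫⁻ t, ENNReal.ofReal (W ω t) ∂μ := by
  have hsection : Prod.mk ω ⁻¹' subgraph W = regionBetween 0 (W ω) Set.univ := by
    ext; simp [subgraph, regionBetween]
  rw [hsection, volume_regionBetween_eq_lintegral' (f := 0) (g := W ω)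
    measurable_const (hW.comp measurable_prodMk_left) MeasurableSet.univ, Measure.restrict_univ]
  simp

lemma iSup_restrict_spanningSets_prodMk_subgraph (μ : Measure T) [SigmaFinite μ]
    (hW : Measurable fun p : Ω × T => W p.1 p.2) (ω : Ω) :
    ⨆ m, (μ.prod volume).restrict (spanningSets (μ.prod volume) m) (Prod.mk ω ⁻¹' subgraph W) =
      ∫⁻ t, ENNReal.ofReal (W ω t) ∂μ := by
  rw [Measure.iSup_restrict_spanningSets, measure_prodMk_subgraph μ hW]

lemma measure_forall_mem_subgraph {n : ℕ} (P : Measure Ω)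
    (hW : Measurable fun p : Ω × T => W p.1 p.2) (q : Fin n → T × ℝ) :
    P {ω | ∀ i, (ω, q i) ∈ subgraph W} =
      P.map (fun ω i => W ω (q i).1) {x | ∀ i, 0 < (q i).2 ∧ (q i).2 < x i} := by
  have hvec : Measurable fun ω (i : Fin n) => W ω (q i).1 :=
    measurable_pi_lambda _ fun i => hW.comp (measurable_id.prodMk measurable_const)
  rw [Measure.map_apply hvec]
  · rfl
  · simp only [Set.ofPred_forall, Set.ofPred_and]
    exact .iInter fun i => (MeasurableSet.const _).inter
      (measurableSet_lt measurable_const (measurable_pi_apply i))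

end Subgraph

section Fidis

variable {Ω₁ Ω₂ T : Type*} [MeasurableSpace Ω₁] [MeasurableSpace Ω₂] [MeasurableSpace T]
  {P₁ : Measure Ω₁} {P₂ : Measure Ω₂} [IsFiniteMeasure P₁] [IsFiniteMeasure P₂]
  {W : Ω₁ → T → ℝ} {W' : Ω₂ → T → ℝ}

lemma map_measure_prodMk_subgraph_eq_of_fidis {ν : Measure (T × ℝ)} [IsFiniteMeasure ν]
    (hW : Measurable fun p : Ω₁ × T => W p.1 p.2) (hW' : Measurable fun p : Ω₂ × T => W' p.1 p.2)
    (hfidis : ∀ (n : ℕ) (t : Fin n → T),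
      P₁.map (fun ω (i : Fin n) => W ω (t i)) = P₂.map (fun ω (i : Fin n) => W' ω (t i))) :
    P₁.map (fun ω => ν (Prod.mk ω ⁻¹' subgraph W)) =
      P₂.map (fun ω => ν (Prod.mk ω ⁻¹' subgraph W')) := by
  refine map_eq_of_lintegral_pow_eq (measurable_measure_prodMk_left (measurableSet_subgraph hW))
    (measurable_measure_prodMk_left (measurableSet_subgraph hW')) (measure_ne_top ν Set.univ)
    (fun ω => measure_mono (Set.subset_univ _)) (fun ω => measure_mono (Set.subset_univ _))
    fun n => ?_
  rw [lintegral_measure_prodMk_left_pow _ _ (measurableSet_subgraph hW),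
    lintegral_measure_prodMk_left_pow _ _ (measurableSet_subgraph hW')]
  refine lintegral_congr fun q => ?_
  rw [measure_forall_mem_subgraph _ hW, measure_forall_mem_subgraph _ hW', hfidis]

theorem map_lintegral_eq_of_fidis (μ : Measure T) [SigmaFinite μ]
    (hW : Measurable fun p : Ω₁ × T => W p.1 p.2) (hW' : Measurable fun p : Ω₂ × T => W' p.1 p.2)
    (hfidis : ∀ (n : ℕ) (t : Fin n → T),
      P₁.map (fun ω (i : Fin n) => W ω (t i)) = P₂.map (fun ω (i : Fin n) => W' ω (t i))) :
    P₁.map (fun ω => ∫⁻ t, ENNReal.ofReal (W ω t) ∂μ) =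
      P₂.map (fun ω => ∫⁻ t, ENNReal.ofReal (W' ω t) ∂μ) := by
  set ν := μ.prod (volume : Measure ℝ)
  have hfin : ∀ m, IsFiniteMeasure (ν.restrict (spanningSets ν m)) := fun m =>
    isFiniteMeasure_restrict.2 (measure_spanningSets_lt_top ν m).ne
  have hmono : ∀ m n, m ≤ n → ν.restrict (spanningSets ν m) ≤ ν.restrict (spanningSets ν n) :=
    fun m n hmn => Measure.restrict_mono_set ν (monotone_spanningSets ν hmn)
  simp only [← iSup_restrict_spanningSets_prodMk_subgraph μ hW,
    ← iSup_restrict_spanningSets_prodMk_subgraph μ hW']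
  exact map_iSup_eq_of_map_eq
    (fun m => measurable_measure_prodMk_left (measurableSet_subgraph hW))
    (fun m => measurable_measure_prodMk_left (measurableSet_subgraph hW'))
    (fun ω m n hmn => hmono m n hmn _) (fun ω m n hmn => hmono m n hmn _)
    fun m => map_measure_prodMk_subgraph_eq_of_fidis hW hW' hfidis

end Fidis

theorem stmt19_general {Ω₁ Ω₂ : Type*} [MeasurableSpace Ω₁] [MeasurableSpace Ω₂]
    (P₁ : Measure Ω₁) [IsProbabilityMeasure P₁]
    (P₂ : Measure Ω₂) [IsProbabilityMeasure P₂]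
    {l : ℕ}
    (W : Ω₁ → Tsp l → ℝ) (hWm : Measurable fun p : Ω₁ × Tsp l => W p.1 p.2)
    (W' : Ω₂ → Tsp l → ℝ) (hW'm : Measurable fun p : Ω₂ × Tsp l => W' p.1 p.2)
    (hfidis : ∀ (n : ℕ) (t : Fin n → Tsp l),
      Measure.map (fun ω (i : Fin n) => W ω (t i)) P₁ =
      Measure.map (fun ω (i : Fin n) => W' ω (t i)) P₂) :
    Measure.map (fun ω => ∫⁻ t, ENNReal.ofReal (W ω t)) P₁ =
      Measure.map (fun ω => ∫⁻ t, ENNReal.ofReal (W' ω t)) P₂ ∧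
    ∀ h : Tsp l,
      Measure.map (fun ω => ∫⁻ t, ENNReal.ofReal (W ω (t - h))) P₁ =
        Measure.map (fun ω => ∫⁻ t, ENNReal.ofReal (W ω t)) P₁ := by
  refine ⟨map_lintegral_eq_of_fidis volume hWm hW'm hfidis, fun h => ?_⟩
  congr 1
  exact funext fun ω => lintegral_sub_right_eq_self (fun t => ENNReal.ofReal (W ω t)) h

/-- the law of the pathwise integral `∫ W(t) dt` depends only on the
finite-dimensional distributions of `W`; in particular it is shift-invariant. -/
theorem stmt19 {Ω₁ Ω₂ : Type*} [MeasurableSpace Ω₁] [MeasurableSpace Ω₂]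
    (P₁ : Measure Ω₁) [IsProbabilityMeasure P₁] (hP₁c : P₁.IsComplete)
    (P₂ : Measure Ω₂) [IsProbabilityMeasure P₂] (hP₂c : P₂.IsComplete)
    {l : ℕ} (hl : 1 ≤ l)
    (W : Ω₁ → Tsp l → ℝ) (hWm : Measurable fun p : Ω₁ × Tsp l => W p.1 p.2)
    (hWnn : ∀ ω t, 0 ≤ W ω t)
    (W' : Ω₂ → Tsp l → ℝ) (hW'm : Measurable fun p : Ω₂ × Tsp l => W' p.1 p.2)
    (hW'nn : ∀ ω t, 0 ≤ W' ω t)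
    (hint : ∀ m : ℕ, 0 < m →
      0 < (∫⁻ t in {t : Tsp l | ∀ i, |t i| ≤ (m : ℝ)}, ∫⁻ ω, ENNReal.ofReal (W ω t) ∂P₁) ∧
      (∫⁻ t in {t : Tsp l | ∀ i, |t i| ≤ (m : ℝ)}, ∫⁻ ω, ENNReal.ofReal (W ω t) ∂P₁) < ⊤)
    (hint' : ∀ m : ℕ, 0 < m →
      0 < (∫⁻ t in {t : Tsp l | ∀ i, |t i| ≤ (m : ℝ)}, ∫⁻ ω, ENNReal.ofReal (W' ω t) ∂P₂) ∧
      (∫⁻ t in {t : Tsp l | ∀ i, |t i| ≤ (m : ℝ)}, ∫⁻ ω, ENNReal.ofReal (W' ω t) ∂P₂) < ⊤)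
    (hfidis : ∀ (n : ℕ) (t : Fin n → Tsp l),
      Measure.map (fun ω (i : Fin n) => W ω (t i)) P₁ =
      Measure.map (fun ω (i : Fin n) => W' ω (t i)) P₂) :
    Measure.map (fun ω => ∫⁻ t, ENNReal.ofReal (W ω t)) P₁ =
      Measure.map (fun ω => ∫⁻ t, ENNReal.ofReal (W' ω t)) P₂ ∧
    ∀ h : Tsp l,
      Measure.map (fun ω => ∫⁻ t, ENNReal.ofReal (W ω (t - h))) P₁ =
        Measure.map (fun ω => ∫⁻ t, ENNReal.ofReal (W ω t)) P₁ :=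
  stmt19_general P₁ P₂ W hWm W' hW'm hfidis
end
end
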